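/- Close-to-tops-only lemma: let v be an anonymous voting rule on m candidates that is pairwise responsive, pairwise isolated, and satisfies ε-strong unanimity. Then for every pair of profiles P⃗, P⃗' with the same vector of top choices (top(P_i) = top(P'_i) for all i) and every candidate x, |v(x,P⃗) − v(x,P⃗')| ≤ mε. -/
import Mathlib


open Finset

variable {C : Type*}

/-- A preference ordering on `C`: a ranking of the candidates, where a higher
rank means more preferred. -/
abbrev Pref (C : Type*) [Fintype C] := C ≃ Fin (Fintype.card C)

/-- `x` is strictly preferred to `y` in `P`. -/
def PrefOver [Fintype C] (P : Pref C) (x y : C) : Prop := P y < P x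

/-- The top (most preferred) candidate of `P`. -/
def topC [Fintype C] [Nonempty C] (P : Pref C) : C :=
  P.symm ⟨Fintype.card C - 1, Nat.sub_lt Fintype.card_pos Nat.one_pos⟩

/-- `x` is directly above `y` in `P`. -/
def DirAbove [Fintype C] (P : Pref C) (x y : C) : Prop := (P x : ℕ) = (P y : ℕ) + 1

/-- The ordering `P` with candidates `x` and `y` swapped. -/
def swapIn [Fintype C] [DecidableEq C] (P : Pref C) (x y : C) : Pref C :=
  (Equiv.swap x y).trans P

/-- A (randomized) voting rule: nonnegative selection probabilities summing to 1. -/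
def IsVotingRule [Fintype C] {n : ℕ} (v : (Fin n → Pref C) → C → ℝ) : Prop :=
  (∀ Pvec x, 0 ≤ v Pvec x) ∧ (∀ Pvec, ∑ x, v Pvec x = 1)

def Anonymous [Fintype C] {n : ℕ} (v : (Fin n → Pref C) → C → ℝ) : Prop :=
  ∀ (σ : Equiv.Perm (Fin n)) (Pvec : Fin n → Pref C) (x : C), v (Pvec ∘ σ) x = v Pvec x

/-- Expected utility of a distribution `d` over candidates under utility `u`. -/
def EU [Fintype C] (u : C → ℝ) (d : C → ℝ) : ℝ := ∑ x, u x * d x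

/-- A `[0,1]`-valued utility function consistent with the ordering `P`. -/
def Consistent [Fintype C] (u : C → ℝ) (P : Pref C) : Prop :=
  (∀ x, u x ∈ Set.Icc (0 : ℝ) 1) ∧ ∀ x y, u x > u y ↔ PrefOver P x y

/-- The random dictatorship voting rule. -/
noncomputable def vdict [Fintype C] [Nonempty C] [DecidableEq C] {n : ℕ}
    (Pvec : Fin n → Pref C) (x : C) : ℝ :=
  ((Finset.univ.filter (fun i => topC (Pvec i) = x)).card : ℝ) / n

def StrategyProofRule [Fintype C] {n : ℕ} (v : (Fin n → Pref C) → C → ℝ) : Prop :=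
  ∀ (i : Fin n) (Pvec : Fin n → Pref C) (P' : Pref C) (u : C → ℝ),
    Consistent u (Pvec i) → EU u (v (Function.update Pvec i P')) ≤ EU u (v Pvec)

def IsBelief [Fintype C] [DecidableEq C] (φ : Pref C → ℝ) : Prop :=
  (∀ P, 0 ≤ φ P) ∧ ∑ P, φ P = 1

/-- The profile where voter `i` submits `Pi` and the other voters submit `Q`. -/
def profileWith [Fintype C] {n : ℕ} (i : Fin n) (Q : {j : Fin n // j ≠ i} → Pref C)
    (Pi : Pref C) : Fin n → Pref C :=
  fun j => if h : j = i then Pi else Q ⟨j, h⟩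

/-- Expected utility for voter `i` reporting `Pi` when the others' orderings are
i.i.d. with distribution `φ`. -/
noncomputable def beliefEU [Fintype C] [DecidableEq C] {n : ℕ}
    (v : (Fin n → Pref C) → C → ℝ) (i : Fin n) (φ : Pref C → ℝ) (u : C → ℝ)
    (Pi : Pref C) : ℝ :=
  ∑ Q : {j : Fin n // j ≠ i} → Pref C, (∏ j, φ (Q j)) * EU u (v (profileWith i Q Pi))

/-- Strategy-proofness with respect to a single i.i.d. belief `φ`. -/
def SPwrtBelief [Fintype C] [DecidableEq C] {n : ℕ}
    (v : (Fin n → Pref C) → C → ℝ) (φ : Pref C → ℝ) : Prop :=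
  ∀ (i : Fin n) (Pi Pi' : Pref C) (u : C → ℝ),
    Consistent u Pi → beliefEU v i φ u Pi' ≤ beliefEU v i φ u Pi

/-- Weak strategy-proofness: strategy-proofness w.r.t. all i.i.d. beliefs. -/
def WeaklySP [Fintype C] [DecidableEq C] {n : ℕ}
    (v : (Fin n → Pref C) → C → ℝ) : Prop :=
  ∀ φ : Pref C → ℝ, IsBelief φ → SPwrtBelief v φ

def ParetoEff [Fintype C] {n : ℕ} (ε : ℝ) (v : (Fin n → Pref C) → C → ℝ) : Prop :=
  ∀ (x y : C) (Pvec : Fin n → Pref C), (∀ i, PrefOver (Pvec i) x y) → v Pvec y ≤ ε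

def StrongUnanimity [Fintype C] [Nonempty C] {n : ℕ} (ε : ℝ)
    (v : (Fin n → Pref C) → C → ℝ) : Prop :=
  ∀ (x : C) (Pvec : Fin n → Pref C), (∀ i, topC (Pvec i) = x) → 1 - ε ≤ v Pvec x

def WeakUnanimity [Fintype C] [Nonempty C] {n : ℕ} (ε : ℝ)
    (v : (Fin n → Pref C) → C → ℝ) : Prop :=
  ∀ P : Pref C, 1 - ε ≤ v (fun _ => P) (topC P)

def SuperWeakUnanimity [Fintype C] [Nonempty C] {n : ℕ} (ε : ℝ)
    (v : (Fin n → Pref C) → C → ℝ) : Prop :=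
  ∀ x : C, ∃ Pvec : Fin n → Pref C, (∀ i, topC (Pvec i) = x) ∧ 1 - ε ≤ v Pvec x

def PairwiseResponsive [Fintype C] [DecidableEq C] {n : ℕ}
    (v : (Fin n → Pref C) → C → ℝ) : Prop :=
  ∀ (Pvec : Fin n → Pref C) (i : Fin n) (x y z : C),
    DirAbove (Pvec i) x y → z ≠ x → z ≠ y →
      v (Function.update Pvec i (swapIn (Pvec i) x y)) z = v Pvec z

def PairwiseIsolated [Fintype C] [DecidableEq C] {n : ℕ}
    (v : (Fin n → Pref C) → C → ℝ) : Prop :=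
  ∀ (i : Fin n) (Pvec Pvec' : Fin n → Pref C) (x y : C),
    DirAbove (Pvec i) x y → Pvec' i = Pvec i →
    (∀ j, j ≠ i → (PrefOver (Pvec j) x y ↔ PrefOver (Pvec' j) x y)) →
    v (Function.update Pvec' i (swapIn (Pvec' i) x y)) y - v Pvec' y =
      v (Function.update Pvec i (swapIn (Pvec i) x y)) y - v Pvec y

/-- The ordering `e` with candidate `x` moved to the top (relative order of the
other candidates preserved). -/
def moveToTop [Fintype C] [DecidableEq C] (e : Pref C) (x : C) : Pref C :=
  e.trans ((Fin.revPerm.trans (Fin.cycleRange (e x).rev)).trans Fin.revPerm)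

/-- The ordering `e` with candidate `x` moved to the bottom (relative order of
the other candidates preserved). -/
def moveToBot [Fintype C] [DecidableEq C] (e : Pref C) (x : C) : Pref C :=
  e.trans (Fin.cycleRange (e x))

/-- The canonical profile `P⃗^{x,j}`: the first `j` voters rank `x` on top and
the remaining voters rank `x` on the bottom, with the other candidates ordered
according to the fixed ordering `e`. -/
def canonProfile [Fintype C] [DecidableEq C] {n : ℕ} (e : Pref C) (x : C) (j : ℕ) :
    Fin n → Pref C :=
  fun i => if (i : ℕ) < j then moveToTop e x else moveToBot e x

/-- `v'(x,j)`: the selection probability of `x` on the canonical profile with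
exactly `j` voters ranking `x` first. -/
def vTopCount [Fintype C] [DecidableEq C] {n : ℕ} (v : (Fin n → Pref C) → C → ℝ)
    (e : Pref C) (x : C) (j : ℕ) : ℝ :=
  v (canonProfile e x j) x


/-! ### Auxiliary lemmas for the close-to-tops-only theorem -/

section CTOAux

variable [Fintype C] [Nonempty C] [DecidableEq C]

private lemma cycleRange_of_lt' {m : ℕ} {i j : Fin m} (h : j < i) :
    ((i.cycleRange j : Fin m) : ℕ) = (j : ℕ) + 1 := by
  cases m with
  | zero => exact i.elim0
  | succ m =>
      rw [Fin.cycleRange_of_lt h]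
      exact Fin.val_add_one_of_lt (lt_of_lt_of_le h (Fin.le_last i))

private lemma cycleRange_of_gt' {m : ℕ} {i j : Fin m} (h : i < j) :
    i.cycleRange j = j := by
  cases m with
  | zero => exact i.elim0
  | succ m => exact Fin.cycleRange_of_gt h

private lemma cycleRange_self' {m : ℕ} (i : Fin m) :
    ((i.cycleRange i : Fin m) : ℕ) = 0 := by
  cases m with
  | zero => exact i.elim0
  | succ m => rw [Fin.cycleRange_self]; rfl

lemma topC_eq_iff (P : Pref C) (c : C) :
    topC P = c ↔ (P c : ℕ) = Fintype.card C - 1 := by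
  unfold topC
  rw [Equiv.symm_apply_eq]
  constructor
  · intro h; rw [← h]
  · intro h; exact Fin.ext h.symm

lemma swapIn_apply (P : Pref C) (a b z : C) :
    swapIn P a b z = P (Equiv.swap a b z) := rfl

lemma swapIn_symm_apply (P : Pref C) (a b : C) (q : Fin (Fintype.card C)) :
    (swapIn P a b).symm q = Equiv.swap a b (P.symm q) := by
  simp [swapIn]

lemma DirAbove.ne {P : Pref C} {a b : C} (h : DirAbove P a b) : a ≠ b := by
  intro hab
  subst hab
  unfold DirAbove at h
  omega

/-- Adjacent swaps avoiding the candidate `t`. -/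
def StepT (t : C) (R S : Pref C) : Prop :=
  ∃ a b, DirAbove R a b ∧ a ≠ t ∧ b ≠ t ∧ S = swapIn R a b

lemma reach_inner (t : C) (R' : Pref C) (ht : topC R' = t)
    (jf : Fin (Fintype.card C)) (hj : (jf : ℕ) + 1 ≤ Fintype.card C - 1) :
    ∀ (r : ℕ) (R : Pref C),
      (∀ q : Fin (Fintype.card C), (jf : ℕ) < (q : ℕ) → R.symm q = R'.symm q) →
      (jf : ℕ) - (R (R'.symm jf) : ℕ) ≤ r →
      ∃ R₁ : Pref C, Relation.ReflTransGen (StepT t) R R₁ ∧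
        ∀ q : Fin (Fintype.card C), (jf : ℕ) ≤ (q : ℕ) → R₁.symm q = R'.symm q := by
  have hcard : 0 < Fintype.card C := Fintype.card_pos
  intro r
  induction r with
  | zero =>
      intro R hagree hms
      have hpos : (R (R'.symm jf) : ℕ) ≤ (jf : ℕ) := by
        by_contra hlt
        push_neg at hlt
        have h1 : R.symm (R (R'.symm jf)) = R'.symm (R (R'.symm jf)) := hagree _ hlt
        rw [Equiv.symm_apply_apply] at h1
        have h2 : R (R'.symm jf) = jf := R'.symm.injective h1.symm
        rw [h2] at hlt
        exact lt_irrefl _ hlt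
      have hpos' : R (R'.symm jf) = jf := Fin.ext (by omega)
      refine ⟨R, Relation.ReflTransGen.refl, fun q hq => ?_⟩
      rcases Nat.lt_or_ge (jf : ℕ) (q : ℕ) with h | h
      · exact hagree q h
      · have hqj : q = jf := Fin.ext (by omega)
        rw [hqj, ← hpos', Equiv.symm_apply_apply, hpos']
  | succ r ih =>
      intro R hagree hms
      have hpos : (R (R'.symm jf) : ℕ) ≤ (jf : ℕ) := by
        by_contra hlt
        push_neg at hlt
        have h1 : R.symm (R (R'.symm jf)) = R'.symm (R (R'.symm jf)) := hagree _ hlt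
        rw [Equiv.symm_apply_apply] at h1
        have h2 : R (R'.symm jf) = jf := R'.symm.injective h1.symm
        rw [h2] at hlt
        exact lt_irrefl _ hlt
      rcases Nat.eq_or_lt_of_le hpos with hpos' | hlt
      · -- already in place
        have hposE : R (R'.symm jf) = jf := Fin.ext hpos'
        refine ⟨R, Relation.ReflTransGen.refl, fun q hq => ?_⟩
        rcases Nat.lt_or_ge (jf : ℕ) (q : ℕ) with h | h
        · exact hagree q h
        · have hqj : q = jf := Fin.ext (by omega)
          rw [hqj, ← hposE, Equiv.symm_apply_apply, hposE]
      · -- move the candidate up one position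
        have hcc : (R (R'.symm jf) : ℕ) + 1 < Fintype.card C := by
          have := jf.isLt; omega
        obtain ⟨p1, hp1⟩ : ∃ p1 : Fin (Fintype.card C),
            (p1 : ℕ) = (R (R'.symm jf) : ℕ) + 1 := ⟨⟨_, hcc⟩, rfl⟩
        obtain ⟨d, hd⟩ : ∃ d, d = R.symm p1 := ⟨_, rfl⟩
        have hRd : R d = p1 := by rw [hd, Equiv.apply_symm_apply]
        have hdir : DirAbove R d (R'.symm jf) := by
          unfold DirAbove
          rw [hRd, hp1]
        obtain ⟨lastf, hlastf⟩ : ∃ q : Fin (Fintype.card C), (q : ℕ) = Fintype.card C - 1 :=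
          ⟨⟨Fintype.card C - 1, by omega⟩, rfl⟩
        have htR' : R'.symm lastf = t := by
          have : lastf = (⟨Fintype.card C - 1, Nat.sub_lt Fintype.card_pos Nat.one_pos⟩ :
              Fin (Fintype.card C)) := Fin.ext (by rw [hlastf])
          rw [this]; exact ht
        have hRtop : R.symm lastf = R'.symm lastf := by
          apply hagree
          omega
        have hdt : d ≠ t := by
          rw [hd, ← htR', ← hRtop]
          intro hcon
          have h3 := R.symm.injective hcon
          have h4 : (p1 : ℕ) = (lastf : ℕ) := by rw [h3]
          rw [hp1, hlastf] at h4
          omega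
        have hct : R'.symm jf ≠ t := by
          rw [← htR']
          intro hcon
          have h3 := R'.symm.injective hcon
          have h4 : (jf : ℕ) = (lastf : ℕ) := by rw [h3]
          rw [hlastf] at h4
          omega
        have hSc : ((swapIn R d (R'.symm jf)) (R'.symm jf) : ℕ) = (R (R'.symm jf) : ℕ) + 1 := by
          rw [swapIn_apply, Equiv.swap_apply_right, hRd, hp1]
        have hSagree : ∀ q : Fin (Fintype.card C), (jf : ℕ) < (q : ℕ) →
            (swapIn R d (R'.symm jf)).symm q = R'.symm q := by
          intro q hq
          rw [swapIn_symm_apply]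
          have hne1 : R.symm q ≠ d := by
            rw [hd]
            intro hcon
            have h3 := R.symm.injective hcon
            have h4 : (q : ℕ) = (p1 : ℕ) := by rw [h3]
            rw [hp1] at h4
            omega
          have hne2 : R.symm q ≠ R'.symm jf := by
            intro hcon
            have h3 : q = R (R'.symm jf) := by rw [← hcon, Equiv.apply_symm_apply]
            have h4 : (q : ℕ) = (R (R'.symm jf) : ℕ) := by rw [h3]
            omega
          rw [Equiv.swap_apply_of_ne_of_ne hne1 hne2]
          exact hagree q hq
        have hms' : (jf : ℕ) - ((swapIn R d (R'.symm jf)) (R'.symm jf) : ℕ) ≤ r := by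
          rw [hSc]
          omega
        obtain ⟨R₁, hchain, hR₁⟩ := ih (swapIn R d (R'.symm jf)) hSagree hms'
        exact ⟨R₁, Relation.ReflTransGen.head ⟨d, R'.symm jf, hdir, hdt, hct, rfl⟩ hchain, hR₁⟩

lemma reach_outer (t : C) (R' : Pref C) (ht : topC R' = t) :
    ∀ (j : ℕ), j ≤ Fintype.card C - 1 → ∀ (R : Pref C),
      (∀ q : Fin (Fintype.card C), j ≤ (q : ℕ) → R.symm q = R'.symm q) →
      Relation.ReflTransGen (StepT t) R R' := by
  intro j
  induction j with
  | zero =>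
      intro _ R hagree
      have h1 : R.symm = R'.symm := Equiv.ext fun q => hagree q (Nat.zero_le _)
      have : R = R' := by rw [← Equiv.symm_symm R, h1, Equiv.symm_symm]
      rw [this]
  | succ j ih =>
      intro hj R hagree
      have hcard : 0 < Fintype.card C := Fintype.card_pos
      have hjm : j < Fintype.card C := by omega
      obtain ⟨R₁, hchain, hR₁⟩ := reach_inner t R' ht ⟨j, hjm⟩ hj j R
        (fun q hq => hagree q hq) (Nat.sub_le j _)
      exact hchain.trans (ih (by omega) R₁ hR₁)

lemma reach (t : C) (R R' : Pref C) (hR : topC R = t) (hR' : topC R' = t) :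
    Relation.ReflTransGen (StepT t) R R' := by
  have hcard : 0 < Fintype.card C := Fintype.card_pos
  refine reach_outer t R' hR' (Fintype.card C - 1) le_rfl R (fun q hq => ?_)
  have hq' : q = (⟨Fintype.card C - 1, Nat.sub_lt Fintype.card_pos Nat.one_pos⟩ :
      Fin (Fintype.card C)) := by
    apply Fin.ext
    have := q.isLt
    show (q : ℕ) = Fintype.card C - 1
    omega
  rw [hq']
  exact hR.trans hR'.symm

section VoteAux

variable {n : ℕ} (v : (Fin n → Pref C) → C → ℝ)

lemma sum_pair_delta (hv : IsVotingRule v) (hpr : PairwiseResponsive v)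
    (Pvec : Fin n → Pref C) (i : Fin n) (a b : C) (dir : DirAbove (Pvec i) a b) :
    v (Function.update Pvec i (swapIn (Pvec i) a b)) a
      + v (Function.update Pvec i (swapIn (Pvec i) a b)) b = v Pvec a + v Pvec b := by
  have hab : a ≠ b := dir.ne
  have hmem : b ∈ univ.erase a := Finset.mem_erase.mpr ⟨hab.symm, mem_univ b⟩
  have key : ∀ z ∈ (univ.erase a).erase b,
      v (Function.update Pvec i (swapIn (Pvec i) a b)) z = v Pvec z := by
    intro z hz
    rw [Finset.mem_erase, Finset.mem_erase] at hz
    exact hpr Pvec i a b z dir hz.2.1 hz.1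
  have e1 : v (Function.update Pvec i (swapIn (Pvec i) a b)) a
      + (v (Function.update Pvec i (swapIn (Pvec i) a b)) b
        + ∑ z ∈ (univ.erase a).erase b, v (Function.update Pvec i (swapIn (Pvec i) a b)) z)
      = 1 := by
    rw [Finset.add_sum_erase _ _ hmem, Finset.add_sum_erase _ _ (mem_univ a)]
    exact hv.2 _
  have e2 : v Pvec a + (v Pvec b + ∑ z ∈ (univ.erase a).erase b, v Pvec z) = 1 := by
    rw [Finset.add_sum_erase _ _ hmem, Finset.add_sum_erase _ _ (mem_univ a)]
    exact hv.2 _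
  have e3 : ∑ z ∈ (univ.erase a).erase b, v (Function.update Pvec i (swapIn (Pvec i) a b)) z
      = ∑ z ∈ (univ.erase a).erase b, v Pvec z := Finset.sum_congr rfl key
  rw [e3] at e1
  linarith

lemma step_delta (hv : IsVotingRule v) (hpr : PairwiseResponsive v)
    (hpi : PairwiseIsolated v) (t : C) (B Q : Fin n → Pref C) (i : Fin n)
    (hBQ : B i = Q i)
    (hcmp : ∀ j, j ≠ i → ∀ a b : C, a ≠ t → b ≠ t →
      (PrefOver (B j) a b ↔ PrefOver (Q j) a b))
    (a b : C) (dir : DirAbove (B i) a b) (ha : a ≠ t) (hb : b ≠ t) (x : C) :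
    v (Function.update B i (swapIn (B i) a b)) x - v B x
      = v (Function.update Q i (swapIn (Q i) a b)) x - v Q x := by
  have dirQ : DirAbove (Q i) a b := hBQ ▸ dir
  have hdb : v (Function.update B i (swapIn (B i) a b)) b - v B b
      = v (Function.update Q i (swapIn (Q i) a b)) b - v Q b :=
    (hpi i B Q a b dir hBQ.symm (fun j hj => hcmp j hj a b ha hb)).symm
  by_cases hxa : x = a
  · subst hxa
    have h1 := sum_pair_delta v hv hpr B i x b dir
    have h2 := sum_pair_delta v hv hpr Q i x b dirQ
    linarith
  · by_cases hxb : x = b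
    · subst hxb; exact hdb
    · rw [hpr B i a b x dir hxa hxb, hpr Q i a b x dirQ hxa hxb]
      ring

lemma chain_delta (hv : IsVotingRule v) (hpr : PairwiseResponsive v)
    (hpi : PairwiseIsolated v) (t : C) (B Q : Fin n → Pref C) (i : Fin n)
    (hcmp : ∀ j, j ≠ i → ∀ a b : C, a ≠ t → b ≠ t →
      (PrefOver (B j) a b ↔ PrefOver (Q j) a b))
    {R R' : Pref C} (h : Relation.ReflTransGen (StepT t) R R') (x : C) :
    v (Function.update B i R') x - v (Function.update B i R) x
      = v (Function.update Q i R') x - v (Function.update Q i R) x := by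
  induction h with
  | refl => ring
  | @tail R₁ R₂ _ hstep ih =>
      obtain ⟨a, b, dir, ha, hb, rfl⟩ := hstep
      have e1 := step_delta v hv hpr hpi t (Function.update B i R₁)
        (Function.update Q i R₁) i (by simp)
        (fun j hj a' b' ha' hb' => by
          rw [Function.update_of_ne hj, Function.update_of_ne hj]
          exact hcmp j hj a' b' ha' hb')
        a b (by rw [Function.update_self]; exact dir) ha hb x
      rw [Function.update_self, Function.update_idem, Function.update_self,
        Function.update_idem] at e1
      linarith

lemma chain_fix (hpr : PairwiseResponsive v) (t : C) (B : Fin n → Pref C) (i : Fin n)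
    {R R' : Pref C} (h : Relation.ReflTransGen (StepT t) R R') :
    v (Function.update B i R') t = v (Function.update B i R) t := by
  induction h with
  | refl => rfl
  | @tail R₁ R₂ _ hstep ih =>
      obtain ⟨a, b, dir, ha, hb, rfl⟩ := hstep
      rw [← ih]
      have e1 := hpr (Function.update B i R₁) i a b t
        (by rw [Function.update_self]; exact dir) (Ne.symm ha) (Ne.symm hb)
      rw [Function.update_self, Function.update_idem] at e1
      exact e1

lemma voter_delta (hv : IsVotingRule v) (hpr : PairwiseResponsive v)
    (hpi : PairwiseIsolated v) (t : C) (B Q : Fin n → Pref C) (i : Fin n)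
    (hBQ : B i = Q i)
    (hcmp : ∀ j, j ≠ i → ∀ a b : C, a ≠ t → b ≠ t →
      (PrefOver (B j) a b ↔ PrefOver (Q j) a b))
    (R' : Pref C) (htB : topC (B i) = t) (htR' : topC R' = t) :
    (∀ x, v (Function.update B i R') x - v B x
        = v (Function.update Q i R') x - v Q x)
    ∧ v (Function.update B i R') t = v B t := by
  have hreach := reach t (B i) R' htB htR'
  constructor
  · intro x
    have h1 := chain_delta v hv hpr hpi t B Q i hcmp hreach x
    rw [Function.update_eq_self] at h1
    rw [hBQ, Function.update_eq_self] at h1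
    exact h1
  · have h2 := chain_fix v hpr t B i hreach
    rw [Function.update_eq_self] at h2
    exact h2

end VoteAux

/-! ### moveToTop lemmas -/

lemma moveToTop_apply_self (R : Pref C) (t : C) :
    ((moveToTop R t) t : ℕ) = Fintype.card C - 1 := by
  unfold moveToTop
  simp only [Equiv.trans_apply, Fin.revPerm_apply]
  rw [Fin.val_rev, cycleRange_self']

lemma moveToTop_topC (R : Pref C) (t : C) : topC (moveToTop R t) = t := by
  rw [topC_eq_iff]
  exact moveToTop_apply_self R t

lemma moveToTop_apply_of_ne (R : Pref C) (t c : C) (hc : c ≠ t) :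
    ((moveToTop R t) c : ℕ)
      = if (R c : ℕ) < (R t : ℕ) then (R c : ℕ) else (R c : ℕ) - 1 := by
  unfold moveToTop
  simp only [Equiv.trans_apply, Fin.revPerm_apply]
  have hqp : (R c : ℕ) ≠ (R t : ℕ) := fun h => hc (R.injective (Fin.ext h))
  have hq := (R c).isLt
  have hp := (R t).isLt
  rcases lt_or_gt_of_ne hqp with h | h
  · rw [if_pos h]
    have hrev : (R t).rev < (R c).rev := Fin.rev_lt_rev.mpr (Fin.lt_def.mpr h)
    rw [cycleRange_of_gt' hrev, Fin.rev_rev]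
  · rw [if_neg (by omega)]
    have hrev : (R c).rev < (R t).rev := Fin.rev_lt_rev.mpr (Fin.lt_def.mpr h)
    rw [Fin.val_rev, cycleRange_of_lt' hrev, Fin.val_rev]
    omega

/-- `R` with `t` moved to the top unless it is already on top. -/
def mtt (R : Pref C) (t : C) : Pref C := if topC R = t then R else moveToTop R t

lemma mtt_topC (R : Pref C) (t : C) : topC (mtt R t) = t := by
  unfold mtt
  split
  · assumption
  · exact moveToTop_topC R t

lemma mtt_eq_self {R : Pref C} {t : C} (h : topC R = t) : mtt R t = R := if_pos h

lemma mtt_prefOver (R : Pref C) (t a b : C) (ha : a ≠ t) (hb : b ≠ t) :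
    PrefOver (mtt R t) a b ↔ PrefOver R a b := by
  unfold mtt
  split
  · exact Iff.rfl
  · have hA := moveToTop_apply_of_ne R t a ha
    have hB := moveToTop_apply_of_ne R t b hb
    have hAt : (R a : ℕ) ≠ (R t : ℕ) := fun h => ha (R.injective (Fin.ext h))
    have hBt : (R b : ℕ) ≠ (R t : ℕ) := fun h => hb (R.injective (Fin.ext h))
    unfold PrefOver
    rw [Fin.lt_def, Fin.lt_def, hA, hB]
    split_ifs <;> omega

section MainAux

variable {n : ℕ} (v : (Fin n → Pref C) → C → ℝ)

lemma group_delta (hv : IsVotingRule v) (hpr : PairwiseResponsive v)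
    (hpi : PairwiseIsolated v) (t : C) :
    ∀ (k : ℕ) (B B' : Fin n → Pref C),
      (univ.filter fun j => B j ≠ B' j).card ≤ k →
      (∀ j, B j ≠ B' j → topC (B j) = t ∧ topC (B' j) = t) →
      (∀ x, v B' x - v B x
          = v (fun j => mtt (B' j) t) x - v (fun j => mtt (B j) t) x)
      ∧ v B' t = v B t := by
  intro k
  induction k with
  | zero =>
      intro B B' hcard htops
      have hBB : B = B' := by
        funext j
        by_contra hne
        have hj : j ∈ univ.filter fun j => B j ≠ B' j := by
          simp only [Finset.mem_filter, mem_univ, true_and]; exact hne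
        have := Finset.card_pos.mpr ⟨j, hj⟩
        omega
      subst hBB
      exact ⟨fun x => by ring, rfl⟩
  | succ k ih =>
      intro B B' hcard htops
      by_cases hBB : B = B'
      · subst hBB; exact ⟨fun x => by ring, rfl⟩
      · have hex : ∃ i, B i ≠ B' i := by
          by_contra hall; push_neg at hall; exact hBB (funext hall)
        obtain ⟨i, hne⟩ := hex
        have htBi := (htops i hne).1
        have htB'i := (htops i hne).2
        have hQl : mtt (B i) t = B i := mtt_eq_self htBi
        have step := voter_delta v hv hpr hpi t B (fun j => mtt (B j) t) i hQl.symm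
          (fun j hj a b ha hb => (mtt_prefOver (B j) t a b ha hb).symm) (B' i) htBi htB'i
        have hupQ : Function.update (fun j => mtt (B j) t) i (B' i)
            = fun j => mtt (Function.update B i (B' i) j) t := by
          funext j
          by_cases hji : j = i
          · subst hji
            rw [Function.update_self, Function.update_self, mtt_eq_self htB'i]
          · rw [Function.update_of_ne hji, Function.update_of_ne hji]
        have hsub : (univ.filter fun j => Function.update B i (B' i) j ≠ B' j)
            ⊆ (univ.filter fun j => B j ≠ B' j).erase i := by
          intro j hj
          rw [Finset.mem_filter] at hj
          rw [Finset.mem_erase, Finset.mem_filter]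
          have hji : j ≠ i := by
            intro h; subst h; exact hj.2 (by rw [Function.update_self])
          refine ⟨hji, mem_univ j, ?_⟩
          have := hj.2
          rwa [Function.update_of_ne hji] at this
        have hcard' : (univ.filter fun j => Function.update B i (B' i) j ≠ B' j).card ≤ k := by
          have h1 := Finset.card_le_card hsub
          have h2 : ((univ.filter fun j => B j ≠ B' j).erase i).card
              = (univ.filter fun j => B j ≠ B' j).card - 1 :=
            Finset.card_erase_of_mem (by
              simp only [Finset.mem_filter, mem_univ, true_and]; exact hne)
          have h3 : 0 < (univ.filter fun j => B j ≠ B' j).card :=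
            Finset.card_pos.mpr ⟨i, by
              simp only [Finset.mem_filter, mem_univ, true_and]; exact hne⟩
          omega
        have htops' : ∀ j, Function.update B i (B' i) j ≠ B' j →
            topC (Function.update B i (B' i) j) = t ∧ topC (B' j) = t := by
          intro j hj
          have hji : j ≠ i := by
            intro h; subst h; exact hj (by rw [Function.update_self])
          rw [Function.update_of_ne hji] at hj ⊢
          exact htops j hj
        obtain ⟨ih1, ih2⟩ := ih (Function.update B i (B' i)) B' hcard' htops'
        constructor
        · intro x
          have e1 := step.1 x
          rw [hupQ] at e1
          have e2 := ih1 x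
          linarith
        · exact ih2.trans step.2

lemma unanimous_bound (hv : IsVotingRule v) {ε : ℝ} (hsu : StrongUnanimity ε v)
    (t x : C) (hx : x ≠ t) (P : Fin n → Pref C) (hP : ∀ i, topC (P i) = t) :
    0 ≤ v P x ∧ v P x ≤ ε := by
  have h1 : 1 - ε ≤ v P t := hsu t P hP
  have h2 : v P x + v P t ≤ 1 := by
    have hs : ∑ z ∈ ({x, t} : Finset C), v P z ≤ ∑ z, v P z :=
      Finset.sum_le_sum_of_subset_of_nonneg (Finset.subset_univ _)
        (fun z _ _ => hv.1 P z)
    rwa [Finset.sum_pair hx, hv.2 P] at hs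
  exact ⟨hv.1 P x, by linarith⟩

lemma eps_nonneg (hv : IsVotingRule v) {ε : ℝ} (hsu : StrongUnanimity ε v) :
    0 ≤ ε := by
  have R : Pref C := Fintype.equivFin C
  have h := hsu (topC R) (fun _ => R) (fun _ => rfl)
  have h2 : v (fun _ => R) (topC R) ≤ 1 := by
    rw [← hv.2 (fun _ => R)]
    exact Finset.single_le_sum (fun z _ => hv.1 _ z) (mem_univ _)
  linarith

end MainAux

end CTOAux
/-- Close-to-tops-only lemma: profiles with the same vector of top
choices get selection probabilities within mε of each other. -/
theorem close_to_tops_only [Fintype C] [Nonempty C] [DecidableEq C] {n : ℕ}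
    (v : (Fin n → Pref C) → C → ℝ) (hv : IsVotingRule v) (han : Anonymous v)
    (hpr : PairwiseResponsive v) (hpi : PairwiseIsolated v) (ε : ℝ)
    (hsu : StrongUnanimity ε v) (Pvec Pvec' : Fin n → Pref C)
    (htop : ∀ i, topC (Pvec i) = topC (Pvec' i)) (x : C) :
    |v Pvec x - v Pvec' x| ≤ (Fintype.card C : ℝ) * ε := by
  have heps : 0 ≤ ε := eps_nonneg v hv hsu
  have key : ∀ S : Finset C,
      |v (fun i => if topC (Pvec i) ∈ S then Pvec' i else Pvec i) x - v Pvec x|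
        ≤ ((S.erase x).card : ℝ) * ε := by
    intro S
    induction S using Finset.induction_on with
    | empty =>
        have hB : (fun i => if topC (Pvec i) ∈ (∅ : Finset C) then Pvec' i else Pvec i)
            = Pvec := funext fun i => if_neg (Finset.notMem_empty _)
        rw [hB]
        simp
    | @insert c S hc ih =>
        have htops : ∀ j,
            (fun i => if topC (Pvec i) ∈ S then Pvec' i else Pvec i) j
              ≠ (fun i => if topC (Pvec i) ∈ insert c S then Pvec' i else Pvec i) j →
            topC ((fun i => if topC (Pvec i) ∈ S then Pvec' i else Pvec i) j) = c ∧
            topC ((fun i => if topC (Pvec i) ∈ insert c S then Pvec' i else Pvec i) j)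
              = c := by
          intro j hj
          by_cases htj : topC (Pvec j) = c
          · have hBj : (if topC (Pvec j) ∈ S then Pvec' j else Pvec j) = Pvec j :=
              if_neg (by rw [htj]; exact hc)
            have hB'j : (if topC (Pvec j) ∈ insert c S then Pvec' j else Pvec j)
                = Pvec' j := if_pos (by rw [htj]; exact Finset.mem_insert_self c S)
            simp only [hBj, hB'j]
            exact ⟨htj, by rw [← htop j]; exact htj⟩
          · exfalso
            apply hj
            have hmem : (topC (Pvec j) ∈ insert c S) = (topC (Pvec j) ∈ S) := by
              simp [Finset.mem_insert, htj]
            simp only [hmem]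
        obtain ⟨gd1, gd2⟩ := group_delta v hv hpr hpi c _
          (fun i => if topC (Pvec i) ∈ S then Pvec' i else Pvec i)
          (fun i => if topC (Pvec i) ∈ insert c S then Pvec' i else Pvec i)
          le_rfl htops
        by_cases hcx : c = x
        · subst hcx
          have hcoeff : ((insert c S).erase c).card = (S.erase c).card := by
            rw [Finset.erase_insert hc, Finset.erase_eq_of_notMem hc]
          calc |v (fun i => if topC (Pvec i) ∈ insert c S then Pvec' i else Pvec i) c
                - v Pvec c|
              = |v (fun i => if topC (Pvec i) ∈ S then Pvec' i else Pvec i) c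
                - v Pvec c| := by rw [gd2]
            _ ≤ ((S.erase c).card : ℝ) * ε := ih
            _ = (((insert c S).erase c).card : ℝ) * ε := by rw [hcoeff]
        · have hxc : x ≠ c := fun h => hcx h.symm
          obtain ⟨l1, u1⟩ := unanimous_bound v hv hsu c x hxc
            (fun j => mtt ((if topC (Pvec j) ∈ insert c S then Pvec' j else Pvec j)) c)
            (fun j => mtt_topC _ _)
          obtain ⟨l2, u2⟩ := unanimous_bound v hv hsu c x hxc
            (fun j => mtt ((if topC (Pvec j) ∈ S then Pvec' j else Pvec j)) c)
            (fun j => mtt_topC _ _)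
          have hbound : |v (fun i => if topC (Pvec i) ∈ insert c S then Pvec' i else Pvec i) x
              - v (fun i => if topC (Pvec i) ∈ S then Pvec' i else Pvec i) x| ≤ ε := by
            rw [gd1 x]
            exact abs_le.mpr ⟨by linarith, by linarith⟩
          have hcoeff : (((insert c S).erase x).card : ℝ) = ((S.erase x).card : ℝ) + 1 := by
            rw [Finset.erase_insert_of_ne hcx,
              Finset.card_insert_of_notMem (fun h => hc (Finset.mem_of_mem_erase h))]
            push_cast
            ring
          calc |v (fun i => if topC (Pvec i) ∈ insert c S then Pvec' i else Pvec i) x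
                - v Pvec x|
              ≤ |v (fun i => if topC (Pvec i) ∈ insert c S then Pvec' i else Pvec i) x
                  - v (fun i => if topC (Pvec i) ∈ S then Pvec' i else Pvec i) x|
                + |v (fun i => if topC (Pvec i) ∈ S then Pvec' i else Pvec i) x
                  - v Pvec x| := abs_sub_le _ _ _
            _ ≤ ε + ((S.erase x).card : ℝ) * ε := add_le_add hbound ih
            _ = (((insert c S).erase x).card : ℝ) * ε := by rw [hcoeff]; ring
  have hfinal := key univ
  have huniv : (fun i => if topC (Pvec i) ∈ (univ : Finset C) then Pvec' i else Pvec i)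
      = Pvec' := funext fun i => if_pos (mem_univ _)
  rw [huniv] at hfinal
  have hcarderase : ((univ : Finset C).erase x).card = Fintype.card C - 1 := by
    rw [Finset.card_erase_of_mem (mem_univ x), Finset.card_univ]
  rw [abs_sub_comm]
  calc |v Pvec' x - v Pvec x| ≤ (((univ : Finset C).erase x).card : ℝ) * ε := hfinal
    _ ≤ (Fintype.card C : ℝ) * ε := by
        rw [hcarderase]
        exact mul_le_mul_of_nonneg_right (Nat.cast_le.mpr (Nat.sub_le _ 1)) heps
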